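/- Let n ≥ 2 be an integer and s ∈ (0,1). Let u : (0,∞) → ℝ be continuous and attain its supremum at some r̄ > 0, i.e. u(r̄) ≥ u(r) for all r > 0. Suppose that the function τ ↦ [u(r̄) − u(r̄τ) + (u(r̄) − u(r̄/τ)) τ^{2s−n}] · τ (τ²−1)^{−1−2s} H(τ) is Lebesgue integrable on (1,∞) and that its integral over (1,∞) is ≤ 0 (i.e. −(−Δ)^s u(r̄) ≥ 0 via the radial representation). Then u is constant on (0,∞). -/

import Mathlib

/-!
Every summand of the integrand is nonnegative at a maximum point `r̄`: `u(r̄) - u(r̄τ) ≥ 0`,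
`u(r̄) - u(r̄/τ) ≥ 0`, and the weight `τ (τ²-1)^{-1-2s} H(τ)` is positive for `τ > 1`.
A nonnegative integrand with nonpositive integral vanishes almost everywhere, so
`u(r̄τ) = u(r̄/τ) = u(r̄)` for almost every `τ > 1`, hence for every `τ > 1` by continuity;
as `τ` ranges over `(1, ∞)`, `r̄τ` and `r̄/τ` cover `(0, ∞) \ {r̄}`.
-/

open MeasureTheory

/-- The kernel `H(τ)` from the radial representation of the fractional Laplacian. -/
noncomputable def Hker (n : ℕ) (s τ : ℝ) : ℝ :=
  2 * Real.pi * (Real.pi ^ (((n : ℝ) - 3) / 2) / Real.Gamma (((n : ℝ) - 1) / 2)) *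
    ∫ θ in (0:ℝ)..Real.pi,
      Real.sin θ ^ (n - 2) *
        ((Real.sqrt (τ ^ 2 - Real.sin θ ^ 2) + Real.cos θ) ^ (1 + 2 * s) /
          Real.sqrt (τ ^ 2 - Real.sin θ ^ 2))

open Set

lemma abs_cos_lt_sqrt_sq_sub_sin_sq {τ : ℝ} (hτ : 1 < τ ^ 2) (θ : ℝ) :
    |Real.cos θ| < Real.sqrt (τ ^ 2 - Real.sin θ ^ 2) := by
  rw [← Real.sqrt_sq_eq_abs]
  exact Real.sqrt_lt_sqrt (sq_nonneg _) (by linarith [Real.sin_sq_add_cos_sq θ])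

lemma sqrt_sq_sub_sin_sq_pos {τ : ℝ} (hτ : 1 < τ ^ 2) (θ : ℝ) :
    0 < Real.sqrt (τ ^ 2 - Real.sin θ ^ 2) :=
  (abs_nonneg _).trans_lt (abs_cos_lt_sqrt_sq_sub_sin_sq hτ θ)

lemma sqrt_sq_sub_sin_sq_add_cos_pos {τ : ℝ} (hτ : 1 < τ ^ 2) (θ : ℝ) :
    0 < Real.sqrt (τ ^ 2 - Real.sin θ ^ 2) + Real.cos θ := by
  linarith [neg_abs_le (Real.cos θ), abs_cos_lt_sqrt_sq_sub_sin_sq hτ θ]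

lemma Hker_pos {n : ℕ} (hn : 2 ≤ n) (s : ℝ) {τ : ℝ} (hτ : 1 < τ ^ 2) : 0 < Hker n s τ := by
  have hGamma : 0 < Real.Gamma (((n : ℝ) - 1) / 2) := by
    have : (2 : ℝ) ≤ n := by exact_mod_cast hn
    exact Real.Gamma_pos_of_pos (by linarith)
  have hcont : Continuous fun θ => Real.sin θ ^ (n - 2) *
      ((Real.sqrt (τ ^ 2 - Real.sin θ ^ 2) + Real.cos θ) ^ (1 + 2 * s) /
        Real.sqrt (τ ^ 2 - Real.sin θ ^ 2)) := by
    refine (by fun_prop : Continuous fun θ => Real.sin θ ^ (n - 2)).mul (Continuous.div ?_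
      (by fun_prop) fun θ => (sqrt_sq_sub_sin_sq_pos hτ θ).ne')
    exact Continuous.rpow_const (by fun_prop) fun θ =>
      Or.inl (sqrt_sq_sub_sin_sq_add_cos_pos hτ θ).ne'
  refine mul_pos (by positivity) (intervalIntegral.intervalIntegral_pos_of_pos_on
    (hcont.intervalIntegrable _ _) (fun θ hθ => ?_) Real.pi_pos)
  exact mul_pos (pow_pos (Real.sin_pos_of_pos_of_lt_pi hθ.1 hθ.2) _)
    (div_pos (Real.rpow_pos_of_pos (sqrt_sq_sub_sin_sq_add_cos_pos hτ θ) _)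
      (sqrt_sq_sub_sin_sq_pos hτ θ))

lemma radial_weight_pos {n : ℕ} (hn : 2 ≤ n) (s : ℝ) {τ : ℝ} (hτ : 1 < τ) :
    0 < τ * (τ ^ 2 - 1) ^ (-1 - 2 * s) * Hker n s τ := by
  have hτ2 : 1 < τ ^ 2 := by nlinarith
  exact mul_pos (mul_pos (by linarith) (Real.rpow_pos_of_pos (by linarith) _)) (Hker_pos hn s hτ2)

lemma ae_eq_zero_of_integral_nonpos {α : Type*} [MeasurableSpace α] {μ : Measure α}
    {f : α → ℝ} (hf : 0 ≤ᵐ[μ] f) (hint : Integrable f μ) (hle : ∫ x, f x ∂μ ≤ 0) :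
    f =ᵐ[μ] 0 :=
  (integral_eq_zero_iff_of_nonneg_ae hf hint).1 (le_antisymm hle (integral_nonneg_of_ae hf))

lemma eq_of_eqOn_mul_of_eqOn_div {u : ℝ → ℝ} {c : ℝ} (hc : 0 < c)
    (hmul : EqOn (fun τ => u (c * τ)) (fun _ => u c) (Ioi 1))
    (hdiv : EqOn (fun τ => u (c / τ)) (fun _ => u c) (Ioi 1)) {r : ℝ} (hr : 0 < r) :
    u r = u c := by
  rcases lt_trichotomy r c with hlt | rfl | hgt
  · simpa [div_div_cancel₀ hc.ne', hr.ne'] using hdiv (show 1 < c / r from (one_lt_div hr).2 hlt)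
  · rfl
  · simpa [mul_div_cancel₀ r hc.ne'] using hmul (show 1 < r / c from (one_lt_div hc).2 hgt)

theorem stmt_8_general (n : ℕ) (hn : 2 ≤ n) (s : ℝ)
    (u : ℝ → ℝ) (hcont : ContinuousOn u (Set.Ioi 0))
    (rb : ℝ) (hrb : 0 < rb) (hmax : ∀ r > (0:ℝ), u r ≤ u rb)
    (hint : IntegrableOn
      (fun τ : ℝ =>
        (u rb - u (rb * τ) + (u rb - u (rb / τ)) * τ ^ (2 * s - (n : ℝ))) *
          (τ * (τ ^ 2 - 1) ^ (-1 - 2 * s) * Hker n s τ))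
      (Set.Ioi 1))
    (hle : (∫ τ in Set.Ioi (1:ℝ),
        (u rb - u (rb * τ) + (u rb - u (rb / τ)) * τ ^ (2 * s - (n : ℝ))) *
          (τ * (τ ^ 2 - 1) ^ (-1 - 2 * s) * Hker n s τ)) ≤ 0) :
    ∀ r > (0:ℝ), u r = u rb := by
  have hweight : ∀ τ ∈ Ioi (1 : ℝ), 0 < τ * (τ ^ 2 - 1) ^ (-1 - 2 * s) * Hker n s τ :=
    fun τ hτ => radial_weight_pos hn s hτ
  have hout : ∀ τ ∈ Ioi (1 : ℝ), 0 ≤ u rb - u (rb * τ) := fun τ hτ =>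
    sub_nonneg.2 (hmax _ (mul_pos hrb (zero_lt_one.trans hτ)))
  have hin : ∀ τ ∈ Ioi (1 : ℝ), 0 ≤ (u rb - u (rb / τ)) * τ ^ (2 * s - (n : ℝ)) := fun τ hτ =>
    have hτ0 : 0 < τ := zero_lt_one.trans hτ
    mul_nonneg (sub_nonneg.2 (hmax _ (div_pos hrb hτ0))) (Real.rpow_nonneg hτ0.le _)
  have hzero := ae_eq_zero_of_integral_nonpos (ae_restrict_of_forall_mem measurableSet_Ioi
    fun τ hτ => mul_nonneg (add_nonneg (hout τ hτ) (hin τ hτ)) (hweight τ hτ).le) hint hle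
  have hconst : ∀ᵐ τ ∂volume.restrict (Ioi (1 : ℝ)), u (rb * τ) = u rb ∧ u (rb / τ) = u rb := by
    filter_upwards [hzero, ae_restrict_mem measurableSet_Ioi] with τ hτ hτ1
    obtain ⟨hmul, hdiv⟩ := (add_eq_zero_iff_of_nonneg (hout τ hτ1) (hin τ hτ1)).1
      ((mul_eq_zero.1 hτ).resolve_right (hweight τ hτ1).ne')
    have hpow : τ ^ (2 * s - (n : ℝ)) ≠ 0 := (Real.rpow_pos_of_pos (zero_lt_one.trans hτ1) _).ne'
    exact ⟨(sub_eq_zero.1 hmul).symm, (sub_eq_zero.1 ((mul_eq_zero.1 hdiv).resolve_right hpow)).symm⟩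
  have hmul : EqOn (fun τ => u (rb * τ)) (fun _ => u rb) (Ioi 1) :=
    Measure.eqOn_open_of_ae_eq (hconst.mono fun τ h => h.1) isOpen_Ioi
      (hcont.comp (by fun_prop) fun τ hτ => mul_pos hrb (zero_lt_one.trans hτ)) continuousOn_const
  have hdiv : EqOn (fun τ => u (rb / τ)) (fun _ => u rb) (Ioi 1) :=
    Measure.eqOn_open_of_ae_eq (hconst.mono fun τ h => h.2) isOpen_Ioi
      (hcont.comp (continuousOn_const.div continuousOn_id fun τ hτ => (zero_lt_one.trans hτ).ne')
        fun τ hτ => div_pos hrb (zero_lt_one.trans hτ)) continuousOn_const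
  exact fun r hr => eq_of_eqOn_mul_of_eqOn_div hrb hmul hdiv hr

/-- Strong maximum principle for radial `s`-subharmonic functions: if a continuous radial
function attains its supremum at `r̄ > 0` and `-(-Δ)^s u(r̄) ≥ 0` via the radial
representation, then `u` is constant. -/
theorem stmt_8 (n : ℕ) (hn : 2 ≤ n) (s : ℝ) (hs : s ∈ Set.Ioo (0:ℝ) 1)
    (u : ℝ → ℝ) (hcont : ContinuousOn u (Set.Ioi 0))
    (rb : ℝ) (hrb : 0 < rb) (hmax : ∀ r > (0:ℝ), u r ≤ u rb)
    (hint : IntegrableOn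
      (fun τ : ℝ =>
        (u rb - u (rb * τ) + (u rb - u (rb / τ)) * τ ^ (2 * s - (n : ℝ))) *
          (τ * (τ ^ 2 - 1) ^ (-1 - 2 * s) * Hker n s τ))
      (Set.Ioi 1))
    (hle : (∫ τ in Set.Ioi (1:ℝ),
        (u rb - u (rb * τ) + (u rb - u (rb / τ)) * τ ^ (2 * s - (n : ℝ))) *
          (τ * (τ ^ 2 - 1) ^ (-1 - 2 * s) * Hker n s τ)) ≤ 0) :
    ∀ r > (0:ℝ), u r = u rb :=
  stmt_8_general n hn s u hcont rb hrb hmax hint hle
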